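/- If a weakly realizable signed pattern contains consecutive entries with skip sizes a, x₁, x₂, …, x_k, b and signs ε₀, ε₁, …, ε_k, ε_{k+1}, then gcd(a, b) divides the signed intermediate sum ε₁x₁ + ε₂x₂ + … + ε_kx_k. In particular, if a = b then a divides ε₁x₁ + ε₂x₂ + … + ε_kx_k. -/

import Mathlib

/-- A signed pattern is a list of pairs `(ε, a)` with `ε ∈ {1, -1}` and `a` a positive skip size. -/
def IsSignedPattern (p : List (ℤ × ℕ)) : Prop :=
  ∀ e ∈ p, (e.1 = 1 ∨ e.1 = -1) ∧ 0 < e.2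

/-- The (signed) sum of the steps of a pattern. -/
def stepSum (p : List (ℤ × ℕ)) : ℤ :=
  (p.map (fun e => e.1 * (e.2 : ℤ))).sum

/-- The `i`-th term of the pattern started at `T`: `T_i = T + ε₁a₁ + ⋯ + εᵢaᵢ`. -/
def patTerm (T : ℤ) (p : List (ℤ × ℕ)) (i : ℕ) : ℤ :=
  T + stepSum (p.take i)

/-- The pattern `p` is weakly realized starting from `T`: `T` is a nonnegative integer, all terms
are nonnegative, and the left term of each step is an even multiple of its skip size when the
sign is `+1`, and an odd multiple when the sign is `-1`. -/
def WeaklyRealizableFrom (T : ℤ) (p : List (ℤ × ℕ)) : Prop :=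
  0 ≤ T ∧ (∀ i, i ≤ p.length → 0 ≤ patTerm T p i) ∧
    ∀ (i : ℕ) (h : i < p.length),
      ((p.get ⟨i, h⟩).1 = 1 → ∃ k : ℤ, patTerm T p i = 2 * k * ((p.get ⟨i, h⟩).2 : ℤ)) ∧
      ((p.get ⟨i, h⟩).1 = -1 → ∃ k : ℤ, patTerm T p i = (2 * k + 1) * ((p.get ⟨i, h⟩).2 : ℤ))

/-- A pattern is weakly realizable if it is weakly realized from some starting point. -/
def WeaklyRealizable (p : List (ℤ × ℕ)) : Prop :=
  ∃ T : ℤ, WeaklyRealizableFrom T p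

/-- A pattern is realizable if it is weakly realized from some starting point in such a way that
all of its terms `T₀, …, Tₙ` are pairwise distinct. -/
def Realizable (p : List (ℤ × ℕ)) : Prop :=
  ∃ T : ℤ, WeaklyRealizableFrom T p ∧
    ∀ i j : ℕ, i ≤ p.length → j ≤ p.length → i ≠ j → patTerm T p i ≠ patTerm T p j

/-!
Every left term of a step is a multiple of that step's skip size, whether the sign asks for an
even or an odd multiple. So the term before the `a`-step is divisible by `a` and the term before
the `b`-step by `b`; both are divisible by `gcd(a, b)`, and they differ by
`εa·a + ε₁x₁ + ⋯ + ε_kx_k`.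
-/

@[simp]
lemma stepSum_nil : stepSum [] = 0 := rfl

@[simp]
lemma stepSum_cons (e : ℤ × ℕ) (l : List (ℤ × ℕ)) :
    stepSum (e :: l) = e.1 * e.2 + stepSum l := by
  simp [stepSum]

@[simp]
lemma stepSum_append (l l' : List (ℤ × ℕ)) : stepSum (l ++ l') = stepSum l + stepSum l' := by
  simp [stepSum]

lemma patTerm_append_length (T : ℤ) (l r : List (ℤ × ℕ)) :
    patTerm T (l ++ r) l.length = T + stepSum l := by
  simp [patTerm]

namespace WeaklyRealizableFrom

variable {T : ℤ} {p : List (ℤ × ℕ)}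

lemma skip_dvd_patTerm (h : WeaklyRealizableFrom T p) {i : ℕ} (hi : i < p.length)
    (hε : (p.get ⟨i, hi⟩).1 = 1 ∨ (p.get ⟨i, hi⟩).1 = -1) :
    ((p.get ⟨i, hi⟩).2 : ℤ) ∣ patTerm T p i := by
  obtain ⟨hplus, hminus⟩ := h.2.2 i hi
  rcases hε with hε | hε
  · obtain ⟨k, hk⟩ := hplus hε
    exact ⟨2 * k, by rw [hk]; ring⟩
  · obtain ⟨k, hk⟩ := hminus hε
    exact ⟨2 * k + 1, by rw [hk]; ring⟩

lemma skip_dvd_start_add_stepSum {l r : List (ℤ × ℕ)} {ε : ℤ} {a : ℕ}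
    (h : WeaklyRealizableFrom T (l ++ (ε, a) :: r)) (hε : ε = 1 ∨ ε = -1) :
    (a : ℤ) ∣ T + stepSum l := by
  have hi : l.length < (l ++ (ε, a) :: r).length := by simp
  have hget : (l ++ (ε, a) :: r).get ⟨l.length, hi⟩ = (ε, a) := by simp
  have := h.skip_dvd_patTerm hi (by rwa [hget])
  rwa [hget, patTerm_append_length] at this

end WeaklyRealizableFrom

/-- If a weakly realizable signed pattern contains consecutive entries with skip sizes
`a, x₁, …, x_k, b`, then `gcd(a, b)` divides the signed intermediate sum `ε₁x₁ + ⋯ + ε_kx_k`;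
in particular, if `a = b` then `a` divides that sum. -/
theorem gcd_divides_intermediate_sum (l₁ l₂ m : List (ℤ × ℕ)) (εa εb : ℤ) (a b : ℕ)
    (hp : IsSignedPattern (l₁ ++ [(εa, a)] ++ m ++ [(εb, b)] ++ l₂))
    (h : WeaklyRealizable (l₁ ++ [(εa, a)] ++ m ++ [(εb, b)] ++ l₂)) :
    ((Nat.gcd a b : ℤ) ∣ stepSum m) ∧ (a = b → (a : ℤ) ∣ stepSum m) := by
  obtain ⟨T, hT⟩ := h
  have hεa : εa = 1 ∨ εa = -1 := (hp (εa, a) (by simp)).1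
  have hεb : εb = 1 ∨ εb = -1 := (hp (εb, b) (by simp)).1
  have ha : (a : ℤ) ∣ T + stepSum l₁ :=
    WeaklyRealizableFrom.skip_dvd_start_add_stepSum (r := m ++ (εb, b) :: l₂)
      (by simpa using hT) hεa
  have hb : (b : ℤ) ∣ T + stepSum (l₁ ++ [(εa, a)] ++ m) :=
    WeaklyRealizableFrom.skip_dvd_start_add_stepSum (r := l₂) (by simpa using hT) hεb
  have hga : (Nat.gcd a b : ℤ) ∣ a := Int.natCast_dvd_natCast.mpr (Nat.gcd_dvd_left a b)
  have hgb : (Nat.gcd a b : ℤ) ∣ b := Int.natCast_dvd_natCast.mpr (Nat.gcd_dvd_right a b)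
  have hgcd : (Nat.gcd a b : ℤ) ∣ stepSum m := by
    have hdiff :
        stepSum m = (T + stepSum (l₁ ++ [(εa, a)] ++ m)) - (T + stepSum l₁) - εa * a := by
      simp only [stepSum_append, stepSum_cons, stepSum_nil]
      ring
    rw [hdiff]
    exact dvd_sub (dvd_sub (hgb.trans hb) (hga.trans ha)) (hga.mul_left εa)
  refine ⟨hgcd, fun hab => ?_⟩
  subst hab
  simpa using hgcd
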